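/- Fix α > 1, σ > 0, a > 0 and a real θ, and define Δ(u) = Φ((a−u)/σ) − Φ((−a−u)/σ). Then the function F(x) = α·x²/(2σ²) + log( Δ(θ+x)/Δ(θ) ) + (1/(α−1)) · log( Δ(θ+(1−α)x)/Δ(θ) ), which equals the Rényi divergence of order α between the truncated Gaussians N^T(θ, σ², [−a,a]) and N^T(θ+x, σ², [−a,a]), is monotonically increasing in x on [0, ∞). -/

import Mathlib

open MeasureTheory Real Filter

/-- Standard Gaussian density. -/
noncomputable def phi (x : ℝ) : ℝ := (Real.sqrt (2 * Real.pi))⁻¹ * Real.exp (-(x ^ 2) / 2)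

/-- Standard Gaussian cumulative distribution function. -/
noncomputable def Phi (x : ℝ) : ℝ := ∫ t in Set.Iic x, phi t

/-- Mass of the Gaussian `N(u, σ²)` on `[−a, a]`. -/
noncomputable def Δ (a σ u : ℝ) : ℝ := Phi ((a - u) / σ) - Phi ((-a - u) / σ)

/-!
Writing `Y ~ N(0, σ²)`, completing the square gives
`Δ(u) = exp (-u²/(2σ²)) · E[exp (u Y / σ²); |Y| ≤ a]`, so `h(u) = log Δ(u) + u²/(2σ²)` is a
cumulant generating function evaluated at `u/σ²`, and is therefore convex by Hölder's inequality.
Up to an additive constant, `F(x) = h(θ + x) + h(θ - (α - 1) x) / (α - 1)`. For `0 ≤ x < y`, the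
increment `F(y) - F(x)` is `(y - x)` times the difference of the secant slopes of `h` over
`[θ + x, θ + y]` and over `[θ - (α - 1) y, θ - (α - 1) x]`; the second interval lies to the left of
the first, so convexity makes the increment nonnegative.
-/

open Set

namespace ProbabilityTheory

variable {Ω : Type*} {m : MeasurableSpace Ω} {X : Ω → ℝ} {μ : Measure Ω}

lemma memLp_exp_mul_of_integrable_exp_mul (hX : AEMeasurable X μ) {c t : ℝ} (hc : 0 < c)
    (h : Integrable (fun ω ↦ exp (t * X ω)) μ) :
    MemLp (fun ω ↦ exp (c * t * X ω)) (ENNReal.ofReal (1 / c)) μ := by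
  have hp : ENNReal.ofReal (1 / c) ≠ 0 := by simpa using hc
  rw [← memLp_norm_rpow_iff (by fun_prop) hp ENNReal.ofReal_ne_top,
    ENNReal.div_self hp ENNReal.ofReal_ne_top, memLp_one_iff_integrable,
    ENNReal.toReal_ofReal (by positivity)]
  refine h.congr (ae_of_all _ fun ω ↦ ?_)
  dsimp only
  rw [norm_of_nonneg (exp_nonneg _), ← exp_mul]
  field_simp

lemma mgf_mul_add_mul_le {s t c d : ℝ} (hs : s ∈ integrableExpSet X μ)
    (ht : t ∈ integrableExpSet X μ) (hst : s ≠ t) (hc : 0 < c) (hd : 0 < d) (hcd : c + d = 1) :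
    mgf X μ (c * s + d * t) ≤ mgf X μ s ^ c * mgf X μ t ^ d := by
  have hX : AEMeasurable X μ := aemeasurable_of_integrable_exp_mul hst hs ht
  have hpow : ∀ r e : ℝ, 0 < e →
      (fun ω ↦ exp (e * r * X ω) ^ (1 / e)) = fun ω ↦ exp (r * X ω) := fun r e he ↦ by
    ext ω
    rw [← exp_mul]
    field_simp
  have holder := integral_mul_le_Lp_mul_Lq_of_nonneg (Real.holderConjugate_one_div hc hd hcd)
    (ae_of_all μ fun ω ↦ (exp_pos (c * s * X ω)).le)
    (ae_of_all μ fun ω ↦ (exp_pos (d * t * X ω)).le)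
    (memLp_exp_mul_of_integrable_exp_mul hX hc hs) (memLp_exp_mul_of_integrable_exp_mul hX hd ht)
  rw [hpow s c hc, hpow t d hd, one_div_one_div, one_div_one_div] at holder
  refine le_of_eq_of_le (integral_congr_ae (ae_of_all μ fun ω ↦ ?_)) holder
  dsimp only
  rw [add_mul, exp_add]

theorem convexOn_cgf : ConvexOn ℝ (integrableExpSet X μ) (cgf X μ) := by
  rcases eq_or_ne μ 0 with rfl | hμ
  · rw [cgf_zero_measure]
    exact convexOn_const 0 convex_integrableExpSet
  refine convexOn_iff_pairwise_pos.mpr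
    ⟨convex_integrableExpSet, fun s hs t ht hst c d hc hd hcd ↦ ?_⟩
  have hpos : ∀ r ∈ integrableExpSet X μ, 0 < mgf X μ r := fun r hr ↦ mgf_pos' hμ hr
  have hmem : c • s + d • t ∈ integrableExpSet X μ := convex_integrableExpSet hs ht hc.le hd.le hcd
  calc cgf X μ (c • s + d • t)
      ≤ log (mgf X μ s ^ c * mgf X μ t ^ d) :=
        log_le_log (hpos _ hmem) (mgf_mul_add_mul_le hs ht hst hc hd hcd)
    _ = c • cgf X μ s + d • cgf X μ t := by
        rw [log_mul (rpow_pos_of_pos (hpos s hs) c).ne' (rpow_pos_of_pos (hpos t ht) d).ne',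
          log_rpow (hpos s hs), log_rpow (hpos t ht)]
        rfl

end ProbabilityTheory

open ProbabilityTheory

lemma ConvexOn.slope_le_slope {𝕜 : Type*} [Field 𝕜] [LinearOrder 𝕜] [IsStrictOrderedRing 𝕜]
    {S : Set 𝕜} {f : 𝕜 → 𝕜} (hf : ConvexOn 𝕜 S f) {p q r s : 𝕜} (hp : p ∈ S) (hq : q ∈ S)
    (hr : r ∈ S) (hs : s ∈ S) (hpq : p < q) (hrs : r < s) (hpr : p ≤ r) (hqs : q ≤ s) :
    slope f p q ≤ slope f r s := by
  have hps : p < s := hpq.trans_le hqs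
  calc slope f p q ≤ slope f p s :=
        hf.slope_mono hp ⟨hq, hpq.ne'⟩ ⟨hs, hps.ne'⟩ hqs
    _ = slope f s p := slope_comm f p s
    _ ≤ slope f s r := hf.slope_mono hs ⟨hp, hps.ne⟩ ⟨hr, hrs.ne⟩ hpr
    _ = slope f r s := slope_comm f s r

theorem ConvexOn.monotoneOn_add_inv_mul_comp_sub {f : ℝ → ℝ} (hf : ConvexOn ℝ univ f) {c : ℝ}
    (hc : 0 < c) (θ : ℝ) : MonotoneOn (fun x ↦ f (θ + x) + c⁻¹ * f (θ - c * x)) (Ici 0) := by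
  intro x hx y _ hxy
  rcases hxy.eq_or_lt with rfl | hxy
  · rfl
  have hslope := hf.slope_le_slope (mem_univ (θ - c * y)) (mem_univ (θ - c * x))
    (mem_univ (θ + x)) (mem_univ (θ + y)) (by nlinarith) (by linarith)
    (by nlinarith [mem_Ici.mp hx]) (by nlinarith [mem_Ici.mp hx])
  rw [slope_def_field, slope_def_field, show θ - c * x - (θ - c * y) = c * (y - x) by ring,
    show θ + y - (θ + x) = y - x by ring, ← div_div,
    div_le_div_iff_of_pos_right (sub_pos.mpr hxy), div_eq_inv_mul] at hslope
  dsimp only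
  linarith

lemma integrable_phi : Integrable phi := by
  refine ((integrable_exp_neg_mul_sq one_half_pos).const_mul (√(2 * π))⁻¹).congr
    (ae_of_all _ fun x ↦ ?_)
  simp only [phi]
  congr 2
  ring

@[fun_prop]
lemma continuous_phi : Continuous phi := by
  unfold phi
  fun_prop

lemma phi_pos (x : ℝ) : 0 < phi x := by
  unfold phi
  positivity

lemma Phi_sub_Phi (l r : ℝ) : Phi r - Phi l = ∫ x in l..r, phi x :=
  intervalIntegral.integral_Iic_sub_Iic integrable_phi.integrableOn integrable_phi.integrableOn

lemma Δ_pos {a σ : ℝ} (ha : 0 < a) (hσ : 0 < σ) (u : ℝ) : 0 < Δ a σ u := by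
  rw [Δ, Phi_sub_Phi]
  exact intervalIntegral.intervalIntegral_pos_of_pos integrable_phi.intervalIntegrable
    phi_pos (by gcongr; linarith)

lemma Δ_eq_integral {σ : ℝ} (hσ : σ ≠ 0) (a u : ℝ) :
    Δ a σ u = σ⁻¹ * ∫ y in -a..a, phi ((y - u) / σ) := by
  rw [intervalIntegral.integral_comp_sub_right (fun z ↦ phi (z / σ)),
    intervalIntegral.integral_comp_div phi hσ, smul_eq_mul, ← mul_assoc, inv_mul_cancel₀ hσ,
    one_mul, Δ, Phi_sub_Phi]

lemma phi_sub_div (y u σ : ℝ) (hσ : σ ≠ 0) :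
    phi ((y - u) / σ) = exp (-u ^ 2 / (2 * σ ^ 2)) * (phi (y / σ) * exp (u / σ ^ 2 * y)) := by
  have hexp : exp (-((y - u) / σ) ^ 2 / 2)
      = exp (-u ^ 2 / (2 * σ ^ 2)) * exp (-(y / σ) ^ 2 / 2) * exp (u / σ ^ 2 * y) := by
    rw [← exp_add, ← exp_add]
    congr 1
    field_simp
    ring
  rw [phi, phi, hexp]
  ring

noncomputable def restrictedGaussian (a σ : ℝ) : Measure ℝ :=
  (volume.restrict (Icc (-a) a)).withDensity fun y ↦ ENNReal.ofReal (phi (y / σ) / σ)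

lemma integral_restrictedGaussian {a σ : ℝ} (ha : 0 ≤ a) (hσ : 0 < σ) (g : ℝ → ℝ) :
    ∫ y, g y ∂restrictedGaussian a σ = σ⁻¹ * ∫ y in -a..a, phi (y / σ) * g y := by
  rw [restrictedGaussian, integral_withDensity_eq_integral_toReal_smul
    (by fun_prop : Continuous fun y ↦ phi (y / σ) / σ).measurable.ennreal_ofReal
    (ae_of_all _ fun _ ↦ ENNReal.ofReal_lt_top), intervalIntegral.integral_of_le (by linarith),
    ← integral_Icc_eq_integral_Ioc, ← integral_const_mul]
  refine integral_congr_ae (ae_of_all _ fun y ↦ ?_)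
  dsimp only
  rw [ENNReal.toReal_ofReal (div_nonneg (phi_pos _).le hσ.le), smul_eq_mul]
  ring

lemma integrableExpSet_restrictedGaussian (a σ : ℝ) :
    integrableExpSet id (restrictedGaussian a σ) = univ := by
  refine eq_univ_of_forall fun t ↦ ?_
  rw [integrableExpSet, mem_ofPred_eq, restrictedGaussian,
    integrable_withDensity_iff_integrable_smul'
    (by fun_prop : Continuous fun y ↦ phi (y / σ) / σ).measurable.ennreal_ofReal
    (ae_of_all _ fun _ ↦ ENNReal.ofReal_lt_top)]
  simp only [ENNReal.toReal_ofReal', id]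
  exact Continuous.integrableOn_Icc (by fun_prop)

lemma Δ_eq_exp_mul_mgf {a σ : ℝ} (ha : 0 ≤ a) (hσ : 0 < σ) (u : ℝ) :
    Δ a σ u = exp (-u ^ 2 / (2 * σ ^ 2)) * mgf id (restrictedGaussian a σ) (u / σ ^ 2) := by
  simp only [Δ_eq_integral hσ.ne', phi_sub_div _ u σ hσ.ne', mgf, id,
    integral_restrictedGaussian ha hσ, intervalIntegral.integral_const_mul]
  ring

lemma log_Δ_add_sq_eq_cgf {a σ : ℝ} (ha : 0 < a) (hσ : 0 < σ) (u : ℝ) :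
    log (Δ a σ u) + u ^ 2 / (2 * σ ^ 2) = cgf id (restrictedGaussian a σ) (u / σ ^ 2) := by
  have hΔ := Δ_pos ha hσ u
  rw [Δ_eq_exp_mul_mgf ha.le hσ] at hΔ ⊢
  rw [log_mul (exp_pos _).ne' (pos_of_mul_pos_right hΔ (exp_pos _).le).ne', log_exp, cgf]
  ring

lemma convexOn_log_Δ_add_sq {a σ : ℝ} (ha : 0 < a) (hσ : 0 < σ) :
    ConvexOn ℝ univ fun u ↦ log (Δ a σ u) + u ^ 2 / (2 * σ ^ 2) := by
  have hcgf := convexOn_cgf (X := id) (μ := restrictedGaussian a σ)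
  rw [integrableExpSet_restrictedGaussian] at hcgf
  have hcomp := hcgf.comp_linearMap (LinearMap.mulRight ℝ (σ ^ 2)⁻¹)
  rw [preimage_univ] at hcomp
  refine hcomp.congr fun u _ ↦ ?_
  rw [Function.comp_apply, LinearMap.mulRight_apply, ← div_eq_mul_inv, log_Δ_add_sq_eq_cgf ha hσ]

/-- The Rényi divergence of order `α` between the truncated Gaussians
`N^T(θ, σ², [−a,a])` and `N^T(θ+x, σ², [−a,a])` is increasing in `x ≥ 0`. -/
theorem truncated_gaussian_renyi_monotone (α σ a θ : ℝ)
    (hα : 1 < α) (hσ : 0 < σ) (ha : 0 < a) :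
    MonotoneOn (fun x : ℝ =>
      α * x ^ 2 / (2 * σ ^ 2) + Real.log (Δ a σ (θ + x) / Δ a σ θ) +
        (1 / (α - 1)) * Real.log (Δ a σ (θ + (1 - α) * x) / Δ a σ θ))
      (Set.Ici 0) := by
  set h : ℝ → ℝ := fun u ↦ log (Δ a σ u) + u ^ 2 / (2 * σ ^ 2)
  have hα' : 0 < α - 1 := sub_pos.mpr hα
  have hΔ : ∀ u, Δ a σ u ≠ 0 := fun u ↦ (Δ_pos ha hσ u).ne'
  have hF : ∀ x : ℝ, α * x ^ 2 / (2 * σ ^ 2) + log (Δ a σ (θ + x) / Δ a σ θ) +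
        (1 / (α - 1)) * log (Δ a σ (θ + (1 - α) * x) / Δ a σ θ)
      = h (θ + x) + (α - 1)⁻¹ * h (θ - (α - 1) * x)
        - (θ ^ 2 * α / ((α - 1) * (2 * σ ^ 2)) + (1 + (α - 1)⁻¹) * log (Δ a σ θ)) := by
    intro x
    rw [show θ + (1 - α) * x = θ - (α - 1) * x by ring, log_div (hΔ _) (hΔ θ),
      log_div (hΔ _) (hΔ θ)]
    simp only [h]
    field_simp
    ring
  intro x hx y hy hxy
  simp only [hF]
  linarith [(convexOn_log_Δ_add_sq ha hσ).monotoneOn_add_inv_mul_comp_sub hα' θ hx hy hxy]
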